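/- Let k ≥ 2 be an integer and φ a k-CNF formula on variables x₁,...,x_n. Let G be the perfect matching on the 2n literal vertices with edges {x_i, x̄_i}. For each clause (y₁ ∨ ⋯ ∨ y_k), add to F the (k−1)-tuple ({y₁, ȳ₂}, {y₁, ȳ₃}, ..., {y₁, ȳ_k}) of 2-subsets of vertices (where ȳ denotes the complementary literal vertex). Identify truth assignments with proper 2-colorings of G. Then an assignment NAE-satisfies a clause (y₁ ∨ ⋯ ∨ y_k) if and only if the associated (k−1)-tuple is not uniformly rainbow with respect to the corresponding 2-coloring; hence φ is NAE-satisfiable iff there is a proper 2-coloring of G with no uniformly rainbow tuple in F. -/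

import Mathlib

/-! A clause is NAE-satisfied iff some literal differs in value from its first literal `y₁`,
i.e. iff `y₁` agrees with `ȳⱼ` for some `j`. Under the coloring `c = 0` on true literals and
`c = 1` on false ones, this says exactly that some pair `{y₁, ȳⱼ}` is monochromatic. Proper
2-colorings of the matching `{xᵢ, x̄ᵢ}` are precisely the colorings arising this way. -/

/-- The truth value of a literal `(i, b)` (`b = true` means `xᵢ`, `b = false` means
`¬xᵢ`) under an assignment `a`. -/
def litVal {n : ℕ} (a : Fin n → Bool) (lit : Fin n × Bool) : Bool :=
  if lit.2 then a lit.1 else !(a lit.1)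

variable {n k : ℕ}

theorem litVal_compl (a : Fin n → Bool) (p : Fin n × Bool) :
    litVal a (p.1, !p.2) = !litVal a p := by
  obtain ⟨i, _ | _⟩ := p <;> simp [litVal]

def colorOf (a : Fin n → Bool) (lit : Fin n × Bool) : Fin 2 :=
  if litVal a lit then 0 else 1

def NAESat (a : Fin n → Bool) (cl : Fin k → Fin n × Bool) : Prop :=
  (∃ s, litVal a (cl s) = true) ∧ ∃ s, litVal a (cl s) = false

def UniformlyRainbow (c : Fin n × Bool → Fin 2) (cl : Fin k → Fin n × Bool) (hk : 0 < k) :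
    Prop :=
  ∀ j : Fin (k - 1), c (cl ⟨0, hk⟩) ≠
    c ((cl ⟨j + 1, Nat.add_lt_of_lt_sub j.isLt⟩).1, !(cl ⟨j + 1, Nat.add_lt_of_lt_sub j.isLt⟩).2)

theorem colorOf_ne_colorOf_compl_iff (a : Fin n → Bool) (p q : Fin n × Bool) :
    colorOf a p ≠ colorOf a (q.1, !q.2) ↔ litVal a p = litVal a q := by
  rw [colorOf, colorOf, litVal_compl]
  cases litVal a p <;> cases litVal a q <;> decide

theorem colorOf_true_ne_false (a : Fin n → Bool) (i : Fin n) :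
    colorOf a (i, true) ≠ colorOf a (i, false) := by
  cases h : a i <;> simp [colorOf, litVal, h]

theorem eq_colorOf_of_proper (c : Fin n × Bool → Fin 2)
    (hc : ∀ i, c (i, true) ≠ c (i, false)) :
    c = colorOf fun i => decide (c (i, true) = 0) := by
  funext ⟨i, b⟩
  have := hc i
  cases b <;> simp only [colorOf, litVal] <;> revert this <;>
    generalize c (i, true) = x <;> generalize c (i, false) = y <;> decide +revert

theorem Bool.exists_true_and_exists_false_iff {ι : Type*} (f : ι → Bool) (i₀ : ι) :
    ((∃ s, f s = true) ∧ ∃ s, f s = false) ↔ ∃ s, f s ≠ f i₀ := by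
  constructor
  · rintro ⟨⟨s, hs⟩, t, ht⟩
    cases h₀ : f i₀
    · exact ⟨s, by simp [hs]⟩
    · exact ⟨t, by simp [ht]⟩
  · rintro ⟨s, hs⟩
    cases h₀ : f i₀
    · exact ⟨⟨s, by simpa [h₀] using hs⟩, i₀, h₀⟩
    · exact ⟨⟨i₀, h₀⟩, s, by simpa [h₀] using hs⟩

theorem Fin.exists_apply_ne_apply_zero_iff {β : Type*} (f : Fin k → β) (hk : 0 < k) :
    (∃ s, f s ≠ f ⟨0, hk⟩) ↔
      ∃ j : Fin (k - 1), f ⟨j + 1, Nat.add_lt_of_lt_sub j.isLt⟩ ≠ f ⟨0, hk⟩ := by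
  constructor
  · rintro ⟨⟨s, hs⟩, hne⟩
    obtain _ | s := s
    · exact absurd rfl hne
    · exact ⟨⟨s, by omega⟩, hne⟩
  · rintro ⟨j, hj⟩
    exact ⟨_, hj⟩

theorem naeSat_iff_not_uniformlyRainbow (a : Fin n → Bool) (cl : Fin k → Fin n × Bool)
    (hk : 0 < k) : NAESat a cl ↔ ¬ UniformlyRainbow (colorOf a) cl hk := by
  simp only [NAESat, UniformlyRainbow, colorOf_ne_colorOf_compl_iff, not_forall,
    Bool.exists_true_and_exists_false_iff _ (⟨0, hk⟩ : Fin k),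
    Fin.exists_apply_ne_apply_zero_iff (fun s => litVal a (cl s)) hk, ne_comm]

/-- With the `(k−1)`-tuple `({y₁,ȳ₂},…,{y₁,ȳ_k})` attached to each clause: an
assignment NAE-satisfies a clause iff the tuple is not uniformly rainbow under the
corresponding 2-coloring (each pair being rainbow means `c y₁ ≠ c ȳⱼ`); hence `φ` is
NAE-satisfiable iff some proper 2-coloring of the matching has no uniformly rainbow
tuple. -/
theorem stmt16 (k n : ℕ) (hk : 2 ≤ k) (φ : Set (Fin k → Fin n × Bool)) :
    (∀ a : Fin n → Bool, ∀ cl ∈ φ,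
      (((∃ s, litVal a (cl s) = true) ∧ (∃ s, litVal a (cl s) = false)) ↔
        ¬ ∀ j : Fin (k - 1),
          (fun lit => if litVal a lit then (0 : Fin 2) else 1) (cl ⟨0, by omega⟩) ≠
          (fun lit => if litVal a lit then (0 : Fin 2) else 1)
            ((cl ⟨j.1 + 1, by have := j.isLt; omega⟩).1,
              !(cl ⟨j.1 + 1, by have := j.isLt; omega⟩).2))) ∧
    ((∃ a : Fin n → Bool, ∀ cl ∈ φ,
        (∃ s, litVal a (cl s) = true) ∧ (∃ s, litVal a (cl s) = false)) ↔
      (∃ c : Fin n × Bool → Fin 2, (∀ i : Fin n, c (i, true) ≠ c (i, false)) ∧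
        ∀ cl ∈ φ, ¬ ∀ j : Fin (k - 1),
          c (cl ⟨0, by omega⟩) ≠
          c ((cl ⟨j.1 + 1, by have := j.isLt; omega⟩).1,
              !(cl ⟨j.1 + 1, by have := j.isLt; omega⟩).2))) := by
  have hk₀ : 0 < k := by omega
  refine ⟨fun a cl _ => naeSat_iff_not_uniformlyRainbow a cl hk₀, ?_⟩
  constructor
  · rintro ⟨a, ha⟩
    exact ⟨colorOf a, colorOf_true_ne_false a,
      fun cl hcl => (naeSat_iff_not_uniformlyRainbow a cl hk₀).1 (ha cl hcl)⟩
  · rintro ⟨c, hc, hc_rainbow⟩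
    refine ⟨fun i => decide (c (i, true) = 0),
      fun cl hcl => (naeSat_iff_not_uniformlyRainbow _ cl hk₀).2 ?_⟩
    rw [← eq_colorOf_of_proper c hc]
    exact hc_rainbow cl hcl
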